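/- Let Q be a v × s contrast matrix of full column rank s (Qᵀ1_v = 0, no zero rows), and let Φ : ℝ^{s×s} → ℝ be Loewner-isotone on positive semidefinite matrices. Let l, m, D be positive integers with D < m, set n = lm, T = {1,…,n}, and let the nuisance regressor be the trigonometric time trend of degree D: h(t) = (1, cos(2πt/n), sin(2πt/n), …, cos(2πDt/n), sin(2πDt/n))ᵀ ∈ ℝ^{2D+1}. Let σ_p : {1,…,l} → {1,…,v} be a sequence of treatments in which every treatment occurs, and suppose its treatment proportions w*, given by w*_u = |{k : σ_p(k) = u}|/l, are Φ-optimal in the marginal model: Φ(N_Q(w*)) ≥ Φ(N_Q(w)) for all w ∈ ℝ^v with w_u > 0 and Σ_u w_u = 1. Define σ : {1,…,n} → {1,…,v} by σ(k + l·j) = σ_p(k) (the m-fold replication of σ_p) and the exact design ξ_σ(u,t) = 1/n if σ(t) = u and 0 otherwise. Then ξ_σ is feasible, (Kᵀ G* K)⁻¹ = N_Q(w*) for every generalized inverse G* of M(ξ_σ), and ξ_σ is Φ-optimal: Φ(N_Q(w*)) ≥ Φ((Kᵀ G K)⁻¹) for every feasible design ξ and every generalized inverse G of M(ξ). -/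

import Mathlib

open Matrix Finset

noncomputable section

/-- An approximate design on `v` treatments and `n` nuisance conditions:
nonnegative weights summing to one. -/
def IsDesign {v n : ℕ} (ξ : Fin v → Fin n → ℝ) : Prop :=
  (∀ u t, 0 ≤ ξ u t) ∧ ∑ u, ∑ t, ξ u t = 1

/-- The treatment proportions design of `ξ`: `(w_ξ)_u = ∑_t ξ(u,t)`. -/
def tpd {v n : ℕ} (ξ : Fin v → Fin n → ℝ) : Fin v → ℝ :=
  fun u => ∑ t, ξ u t

/-- The regression vector `f(u,t) = (e_uᵀ, h(t)ᵀ)ᵀ`. -/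
def regvec {v n : ℕ} {ι : Type*} (h : Fin n → ι → ℝ) (u : Fin v) (t : Fin n) :
    Fin v ⊕ ι → ℝ :=
  Sum.elim (fun i => if i = u then 1 else 0) (h t)

/-- The moment matrix `M(ξ) = ∑_{u,t} ξ(u,t) f(u,t) f(u,t)ᵀ`. -/
def momM {v n : ℕ} {ι : Type*} [Fintype ι] (h : Fin n → ι → ℝ)
    (ξ : Fin v → Fin n → ℝ) : Matrix (Fin v ⊕ ι) (Fin v ⊕ ι) ℝ :=
  ∑ u, ∑ t, ξ u t • vecMulVec (regvec h u t) (regvec h u t)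

/-- The matrix `K = (Qᵀ, 0)ᵀ`. -/
def Kmat {v s : ℕ} (ι : Type*) (Q : Matrix (Fin v) (Fin s) ℝ) :
    Matrix (Fin v ⊕ ι) (Fin s) ℝ :=
  Matrix.of fun i j => Sum.elim (fun a => Q a j) (fun _ => 0) i

/-- Feasibility of a design: the column space of `K` is contained in the
column space of `M(ξ)`. -/
def Feasible {v n s : ℕ} {ι : Type*} [Fintype ι] (h : Fin n → ι → ℝ)
    (Q : Matrix (Fin v) (Fin s) ℝ) (ξ : Fin v → Fin n → ℝ) : Prop :=
  LinearMap.range (Kmat ι Q).mulVecLin ≤ LinearMap.range (momM h ξ).mulVecLin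

/-- `G` is a generalized inverse of `M`. -/
def IsGInv {ι : Type*} [Fintype ι] (M G : Matrix ι ι ℝ) : Prop :=
  M * G * M = M

/-- Information matrix `N_Q(w) = (Qᵀ diag(w)⁻¹ Q)⁻¹` of a treatment
proportions design in the marginal model. -/
def NQ {v s : ℕ} (Q : Matrix (Fin v) (Fin s) ℝ) (w : Fin v → ℝ) :
    Matrix (Fin s) (Fin s) ℝ :=
  (Qᵀ * diagonal (fun u => (w u)⁻¹) * Q)⁻¹

/-- The matrix `H_ξ` whose `u`-th column is `(1/w_u) ∑_t ξ(u,t) h(t)`. -/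
def Hmat {v n : ℕ} {ι : Type*} (h : Fin n → ι → ℝ) (ξ : Fin v → Fin n → ℝ) :
    Matrix ι (Fin v) ℝ :=
  Matrix.of fun i u => (tpd ξ u)⁻¹ * ∑ t, ξ u t * h t i

/-- `ξ` is resistant to nuisance effects for the contrasts `Q`. -/
def NuisanceResistant {v n s : ℕ} {ι : Type*} (h : Fin n → ι → ℝ)
    (Q : Matrix (Fin v) (Fin s) ℝ) (ξ : Fin v → Fin n → ℝ) : Prop :=
  Hmat h ξ * Q = 0

/-- `ξ` is balanced: all columns of `H_ξ` coincide. -/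
def BalancedDesign {v n : ℕ} {ι : Type*} (h : Fin n → ι → ℝ)
    (ξ : Fin v → Fin n → ℝ) : Prop :=
  ∀ u u' : Fin v, (fun i => Hmat h ξ i u) = (fun i => Hmat h ξ i u')

/-!
Replicating `σp` `m` times makes every frequency `b ≤ D < m` average out on each treatment:
with `μ = exp (2πi/n)`, the sum `∑_{σ t = u} μ^{b(t+1)}` factors as a sum over one period times
`∑_{i<m} ζ^{bi}` for the primitive `m`-th root of unity `ζ = μ^l`, which vanishes. So all columns
of `H_ξσ` equal `(1, 0, …, 0)`: `ξσ` is balanced, hence nuisance resistant as `Qᵀ1 = 0`, and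
`Z = (diag(w*)⁻¹ Q; 0)` solves `M(ξσ) Z = K`, which gives `KᵀG K = Qᵀ diag(w*)⁻¹ Q` for every
generalized inverse `G`.

For an arbitrary feasible `ξ`, choose `Z` with `M(ξ) Z = K`; completing the square against
`(diag(w_ξ)⁻¹ Q; 0)` gives `Zᵀ M(ξ) Z ≥ Qᵀ diag(w_ξ)⁻¹ Q` in the Loewner order. Inversion reverses
it, so `(KᵀG K)⁻¹ ≤ N_Q(w_ξ)`, and isotonicity of `Φ` with the marginal optimality of `w*` ends
the proof.
-/

namespace Matrix

lemma isSymm_transpose_mul_diagonal_mul {m n α : Type*} [Fintype m] [DecidableEq m]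
    [CommSemiring α] (Q : Matrix m n α) (d : m → α) : (Qᵀ * diagonal d * Q).IsSymm := by
  rw [IsSymm, transpose_mul, transpose_mul, transpose_transpose, diagonal_transpose,
    Matrix.mul_assoc]

lemma range_mulVecLin_le_iff_exists_mul_eq {m k l R : Type*} [Fintype k] [DecidableEq k]
    [Fintype l] [CommRing R] {A : Matrix m l R} {B : Matrix m k R} :
    LinearMap.range B.mulVecLin ≤ LinearMap.range A.mulVecLin ↔ ∃ Z : Matrix l k R, A * Z = B := by
  constructor
  · intro hle
    choose y hy using fun j => hle (LinearMap.mem_range_self B.mulVecLin (Pi.single j 1))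
    refine ⟨(of y)ᵀ, ext_of_mulVec_single fun j => ?_⟩
    rw [← mulVec_mulVec, mulVec_single_one]
    exact hy j
  · rintro ⟨Z, rfl⟩ _ ⟨x, rfl⟩
    exact ⟨Z *ᵥ x, by simp [mulVec_mulVec]⟩

lemma mulVec_injective_of_rank_eq {m K : Type*} [Fintype m] [Field K] {s : ℕ}
    {Q : Matrix m (Fin s) K} (hQ : Q.rank = s) : Function.Injective Q.mulVec := by
  rw [mulVec_injective_iff, linearIndependent_iff_card_eq_finrank_span, Fintype.card_fin]
  exact hQ.symm.trans Q.rank_eq_finrank_span_cols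

lemma PosSemidef.isSymm {ι : Type*} {M : Matrix ι ι ℝ} (hM : M.PosSemidef) : M.IsSymm :=
  isHermitian_iff_isSymm.1 hM.isHermitian

variable {ι κ : Type*} [Fintype ι] [Fintype κ]

/-- Completing the square: `Yᵀ M Y - C = (Y - Z)ᵀ M (Y - Z) + (C - Zᵀ M Z)`. -/
lemma PosSemidef.posSemidef_transpose_mul_mul_sub {M : Matrix ι ι ℝ} (hM : M.PosSemidef)
    {Y Z : Matrix ι κ ℝ} {C : Matrix κ κ ℝ} (hC : C.IsSymm) (hZY : Zᵀ * M * Y = C)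
    (hZZ : (C - Zᵀ * M * Z).PosSemidef) : (Yᵀ * M * Y - C).PosSemidef := by
  have hYZ : Yᵀ * M * Z = C := by
    rw [← hC.eq, ← hZY, transpose_mul, transpose_mul, transpose_transpose, hM.isSymm.eq,
      Matrix.mul_assoc]
  have hexp : Yᵀ * M * Y - C = (Y - Z)ᴴ * M * (Y - Z) + (C - Zᵀ * M * Z) := by
    simp only [conjTranspose_eq_transpose_of_trivial, transpose_sub, Matrix.sub_mul,
      Matrix.mul_sub, hYZ, hZY]
    abel
  rw [hexp]
  exact (hM.conjTranspose_mul_mul_same (Y - Z)).add hZZ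

lemma posSemidef_inv_sub_inv [DecidableEq ι] {A B : Matrix ι ι ℝ} (hB : B.PosDef)
    (hAB : (A - B).PosSemidef) : (B⁻¹ - A⁻¹).PosSemidef := by
  have hA : A.PosDef := by simpa using hB.add_posSemidef hAB
  have hAA : A * A⁻¹ = 1 := mul_nonsing_inv A ((isUnit_iff_isUnit_det A).1 hA.isUnit)
  have hBB : B * B⁻¹ = 1 := mul_nonsing_inv B ((isUnit_iff_isUnit_det B).1 hB.isUnit)
  have hAsymm : A⁻¹.IsSymm := hA.inv.posSemidef.isSymm
  have hcross : (A⁻¹)ᵀ * B * B⁻¹ = A⁻¹ := by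
    rw [hAsymm.eq, Matrix.mul_assoc, hBB, Matrix.mul_one]
  have hgap : (A⁻¹ - (A⁻¹)ᵀ * B * A⁻¹).PosSemidef := by
    convert hAB.conjTranspose_mul_mul_same A⁻¹ using 1
    rw [conjTranspose_eq_transpose_of_trivial, hAsymm.eq, Matrix.mul_sub, Matrix.sub_mul,
      Matrix.mul_assoc A⁻¹ A, hAA, Matrix.mul_one]
  have key := hB.posSemidef.posSemidef_transpose_mul_mul_sub hAsymm hcross hgap
  rwa [hB.inv.posSemidef.isSymm.eq, Matrix.mul_assoc, hBB, Matrix.mul_one] at key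

lemma posDef_transpose_mul_diagonal_inv_mul {v s : ℕ} {Q : Matrix (Fin v) (Fin s) ℝ}
    (hQ : Function.Injective Q.mulVec) {w : Fin v → ℝ} (hw : ∀ u, 0 < w u) :
    (Qᵀ * diagonal (fun u => (w u)⁻¹) * Q).PosDef := by
  rw [← conjTranspose_eq_transpose_of_trivial]
  exact (PosDef.diagonal fun u => inv_pos.2 (hw u)).conjTranspose_mul_mul_same hQ

end Matrix

lemma IsGInv.transpose_mul_mul_eq {ι κ : Type*} [Fintype ι] {M G : Matrix ι ι ℝ}
    (hM : M.IsSymm) (hG : IsGInv M G) {Z K : Matrix ι κ ℝ} (hZ : M * Z = K) :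
    Kᵀ * G * K = Zᵀ * M * Z := by
  rw [← hZ, transpose_mul, hM.eq]
  simp only [Matrix.mul_assoc]
  rw [← Matrix.mul_assoc M G, ← Matrix.mul_assoc (M * G), hG]

def crossMoment {v n : ℕ} {ι : Type*} (h : Fin n → ι → ℝ) (ξ : Fin v → Fin n → ℝ) :
    Matrix ι (Fin v) ℝ :=
  Matrix.of fun i u => ∑ t, ξ u t * h t i

section MomentMatrix

variable {v n s : ℕ} {ι : Type*}

lemma Kmat_eq_fromRows (P : Matrix (Fin v) (Fin s) ℝ) : Kmat ι P = fromRows P 0 := by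
  ext (a | i) j <;> rfl

lemma crossMoment_mul_diagonal_inv (h : Fin n → ι → ℝ) (ξ : Fin v → Fin n → ℝ) :
    crossMoment h ξ * diagonal (fun u => (tpd ξ u)⁻¹) = Hmat h ξ := by
  ext i u
  simp [crossMoment, Hmat, mul_comm]

variable [Fintype ι] (h : Fin n → ι → ℝ) (ξ : Fin v → Fin n → ℝ)

lemma Kmat_transpose_mul_fromRows {k : Type*} (P : Matrix (Fin v) (Fin s) ℝ)
    (A : Matrix (Fin v) k ℝ) (B : Matrix ι k ℝ) : (Kmat ι P)ᵀ * fromRows A B = Pᵀ * A := by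
  rw [Kmat_eq_fromRows, transpose_fromRows, fromCols_mul_fromRows, transpose_zero,
    Matrix.zero_mul, add_zero]

lemma momM_eq_fromBlocks :
    momM h ξ = fromBlocks (diagonal (tpd ξ)) (crossMoment h ξ)ᵀ (crossMoment h ξ)
      (∑ u, ∑ t, ξ u t • vecMulVec (h t) (h t)) := by
  ext (a | i) (b | k)
  · simp [momM, regvec, tpd, Matrix.sum_apply, vecMulVec_apply, diagonal_apply]
    split_ifs with hab <;> simp [hab]
  all_goals simp [momM, regvec, crossMoment, Matrix.sum_apply, vecMulVec_apply]

lemma isSymm_momM : (momM h ξ).IsSymm := by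
  ext i j
  simp [momM, Matrix.sum_apply, vecMulVec_apply, mul_comm]

lemma momM_posSemidef (hξ : ∀ u t, 0 ≤ ξ u t) : (momM h ξ).PosSemidef :=
  posSemidef_sum _ fun u _ => posSemidef_sum _ fun t _ =>
    (posSemidef_vecMulVec_self_star (regvec h u t)).smul (hξ u t)

lemma momM_mul_Kmat (P : Matrix (Fin v) (Fin s) ℝ) :
    momM h ξ * Kmat ι P = fromRows (diagonal (tpd ξ) * P) (crossMoment h ξ * P) := by
  rw [momM_eq_fromBlocks, Kmat_eq_fromRows, fromBlocks_mul_fromRows]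
  simp

end MomentMatrix

section Designs

variable {v n s : ℕ} {ι : Type*} {h : Fin n → ι → ℝ} {ξ : Fin v → Fin n → ℝ}
  {Q : Matrix (Fin v) (Fin s) ℝ}

lemma BalancedDesign.nuisanceResistant (hξ : BalancedDesign h ξ) (hQ : ∀ j, ∑ u, Q u j = 0) :
    NuisanceResistant h Q ξ := by
  ext i j
  rcases isEmpty_or_nonempty (Fin v) with hv | ⟨⟨u₀⟩⟩
  · simp [mul_apply]
  have hcol : ∀ u, Hmat h ξ i u = Hmat h ξ i u₀ := fun u => congrFun (hξ u u₀) i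
  simp [mul_apply, hcol, ← mul_sum, hQ]

variable [Fintype ι]

lemma NuisanceResistant.momM_mul_Kmat_eq_Kmat (hR : NuisanceResistant h Q ξ)
    (hw : ∀ u, tpd ξ u ≠ 0) :
    momM h ξ * Kmat ι (diagonal (fun u => (tpd ξ u)⁻¹) * Q) = Kmat ι Q := by
  rw [momM_mul_Kmat, Kmat_eq_fromRows, ← Matrix.mul_assoc, ← Matrix.mul_assoc,
    crossMoment_mul_diagonal_inv, hR, diagonal_mul_diagonal]
  simp [mul_inv_cancel₀ (hw _)]

lemma NuisanceResistant.feasible (hR : NuisanceResistant h Q ξ) (hw : ∀ u, tpd ξ u ≠ 0) :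
    Feasible h Q ξ :=
  range_mulVecLin_le_iff_exists_mul_eq.2 ⟨_, hR.momM_mul_Kmat_eq_Kmat hw⟩

lemma NuisanceResistant.inv_transpose_mul_mul_eq_NQ (hR : NuisanceResistant h Q ξ)
    (hw : ∀ u, tpd ξ u ≠ 0) {G : Matrix (Fin v ⊕ ι) (Fin v ⊕ ι) ℝ} (hG : IsGInv (momM h ξ) G) :
    ((Kmat ι Q)ᵀ * G * Kmat ι Q)⁻¹ = NQ Q (tpd ξ) := by
  rw [hG.transpose_mul_mul_eq (isSymm_momM h ξ) (hR.momM_mul_Kmat_eq_Kmat hw),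
    Matrix.mul_assoc, hR.momM_mul_Kmat_eq_Kmat hw, Kmat_eq_fromRows Q,
    Kmat_transpose_mul_fromRows, transpose_mul, diagonal_transpose]
  rfl

lemma tpd_pos_of_feasible (hξ : ∀ u t, 0 ≤ ξ u t) (hQ : ∀ u, ∃ j, Q u j ≠ 0)
    (hf : Feasible h Q ξ) (u : Fin v) : 0 < tpd ξ u := by
  refine (sum_nonneg fun t _ => hξ u t).lt_of_ne' fun hw => ?_
  have hrow : ∀ t, ξ u t = 0 := fun t =>
    (sum_eq_zero_iff_of_nonneg fun t _ => hξ u t).1 hw t (mem_univ t)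
  obtain ⟨Z, hZ⟩ := range_mulVecLin_le_iff_exists_mul_eq.1 hf
  obtain ⟨j, hj⟩ := hQ u
  have hentry := congrFun (congrFun hZ (Sum.inl u)) j
  rw [momM_eq_fromBlocks, ← fromRows_toRows Z, fromBlocks_mul_fromRows, fromRows_apply_inl,
    Matrix.add_apply, diagonal_mul, tpd, hw, zero_mul, zero_add] at hentry
  simp [Kmat, mul_apply, crossMoment, hrow] at hentry
  exact hj hentry.symm

lemma posSemidef_transpose_mul_momM_mul_sub (hξ : ∀ u t, 0 ≤ ξ u t) (hw : ∀ u, tpd ξ u ≠ 0)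
    {Z : Matrix (Fin v ⊕ ι) (Fin s) ℝ} (hZ : momM h ξ * Z = Kmat ι Q) :
    (Zᵀ * momM h ξ * Z - Qᵀ * diagonal (fun u => (tpd ξ u)⁻¹) * Q).PosSemidef := by
  set D := diagonal (fun u => (tpd ξ u)⁻¹) with hD
  have hDQ : (D * Q)ᵀ * Q = Qᵀ * D * Q := by
    rw [transpose_mul, hD, diagonal_transpose, Matrix.mul_assoc]
  have hwD : diagonal (tpd ξ) * (D * Q) = Q := by
    rw [← Matrix.mul_assoc, hD, diagonal_mul_diagonal]
    simp [mul_inv_cancel₀ (hw _)]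
  refine (momM_posSemidef h ξ hξ).posSemidef_transpose_mul_mul_sub (Z := Kmat ι (D * Q))
    (isSymm_transpose_mul_diagonal_mul Q _) ?_ ?_
  · rw [Matrix.mul_assoc _ (momM h ξ), hZ, Kmat_eq_fromRows Q, Kmat_transpose_mul_fromRows, hDQ]
  · rw [Matrix.mul_assoc _ (momM h ξ), momM_mul_Kmat, Kmat_transpose_mul_fromRows, hwD, hDQ,
      sub_self]
    exact PosSemidef.zero

lemma posSemidef_transpose_mul_mul_sub_of_feasible (hξ : ∀ u t, 0 ≤ ξ u t)
    (hQrow : ∀ u, ∃ j, Q u j ≠ 0) (hf : Feasible h Q ξ)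
    {G : Matrix (Fin v ⊕ ι) (Fin v ⊕ ι) ℝ} (hG : IsGInv (momM h ξ) G) :
    ((Kmat ι Q)ᵀ * G * Kmat ι Q - Qᵀ * diagonal (fun u => (tpd ξ u)⁻¹) * Q).PosSemidef := by
  obtain ⟨Z, hZ⟩ := range_mulVecLin_le_iff_exists_mul_eq.1 hf
  rw [hG.transpose_mul_mul_eq (isSymm_momM h ξ) hZ]
  exact posSemidef_transpose_mul_momM_mul_sub hξ
    (fun u => (tpd_pos_of_feasible hξ hQrow hf u).ne') hZ

end Designs

lemma Finset.sum_range_mul_mul_pow_of_periodic {R : Type*} [CommSemiring R] {f : ℕ → R} {l : ℕ}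
    (hf : Function.Periodic f l) (z : R) (m : ℕ) :
    ∑ t ∈ range (l * m), f t * z ^ t
      = (∑ j ∈ range l, f j * z ^ j) * ∑ i ∈ range m, (z ^ l) ^ i := by
  induction m with
  | zero => simp
  | succ m ih =>
    have hshift : ∀ j, f (l * m + j) * z ^ (l * m + j) = f j * z ^ j * (z ^ l) ^ m := fun j => by
      have := (hf.nat_mul m) j
      rw [Nat.cast_id, mul_comm] at this
      rw [add_comm, this, pow_add, pow_mul, mul_assoc]
    rw [Nat.mul_succ, Finset.sum_range_add, ih, Finset.sum_range_succ, mul_add, Finset.sum_mul,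
      Finset.sum_mul]
    simp only [hshift]

lemma IsPrimitiveRoot.geom_sum_pow_eq_zero {R : Type*} [CommRing R] [IsDomain R] {ζ : R} {m b : ℕ}
    (hζ : IsPrimitiveRoot ζ m) (hb0 : 0 < b) (hbm : b < m) : ∑ i ∈ range m, (ζ ^ b) ^ i = 0 := by
  have hne : ζ ^ b ≠ 1 := fun h1 => hbm.not_ge (Nat.le_of_dvd hb0 ((hζ.pow_eq_one_iff_dvd b).1 h1))
  refine eq_zero_of_ne_zero_of_mul_left_eq_zero (sub_ne_zero_of_ne hne.symm) ?_
  rw [mul_neg_geom_sum, ← pow_mul, mul_comm, pow_mul, hζ.pow_eq_one, one_pow, sub_self]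

lemma sum_comp_replicate_mul_pow {R : Type*} [CommSemiring R] {v l m n : ℕ} (hl : 0 < l)
    (hn : n = l * m) {σp : Fin l → Fin v} {σ : Fin n → Fin v}
    (hσ : ∀ t : Fin n, σ t = σp ⟨t % l, Nat.mod_lt _ hl⟩) (g : Fin v → R) (z : R) :
    ∑ t : Fin n, g (σ t) * z ^ (t : ℕ)
      = (∑ k : Fin l, g (σp k) * z ^ (k : ℕ)) * ∑ i ∈ range m, (z ^ l) ^ i := by
  subst hn
  let f : ℕ → R := fun t => g (σp ⟨t % l, Nat.mod_lt _ hl⟩)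
  have hf : Function.Periodic f l := fun t => by simp only [f, Nat.add_mod_right]
  have hfk : ∀ k : Fin l, f k = g (σp k) := fun k => by simp only [f, Nat.mod_eq_of_lt k.isLt]
  simp only [hσ]
  rw [Fin.sum_univ_eq_sum_range (fun t => f t * z ^ t), Finset.sum_range_mul_mul_pow_of_periodic hf,
    ← Fin.sum_univ_eq_sum_range (fun t => f t * z ^ t)]
  simp only [hfk]

section Replication

variable {v l m n : ℕ}

lemma tpd_replicate (hl : 0 < l) (hm : m ≠ 0) (hn : n = l * m) {σp : Fin l → Fin v}
    {σ : Fin n → Fin v} (hσ : ∀ t : Fin n, σ t = σp ⟨t % l, Nat.mod_lt _ hl⟩)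
    {ξ : Fin v → Fin n → ℝ} (hξ : ∀ u t, ξ u t = if σ t = u then (n : ℝ)⁻¹ else 0) (u : Fin v) :
    tpd ξ u = (#{k | σp k = u} : ℝ) / l := by
  have key := sum_comp_replicate_mul_pow hl hn hσ (fun w => if w = u then (n : ℝ)⁻¹ else 0) 1
  simp only [one_pow, mul_one, sum_const, card_range, nsmul_eq_mul, ← hξ] at key
  rw [tpd, key, Finset.sum_ite, sum_const_zero, add_zero, sum_const, nsmul_eq_mul, hn]
  push_cast
  field_simp

lemma sum_replicate_mul_exp_eq_zero (hl : 0 < l) (hn : n = l * m) {σp : Fin l → Fin v}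
    {σ : Fin n → Fin v} (hσ : ∀ t : Fin n, σ t = σp ⟨t % l, Nat.mod_lt _ hl⟩)
    (g : Fin v → ℝ) {b : ℕ} (hb0 : 0 < b) (hbm : b < m) :
    ∑ t : Fin n, (g (σ t) : ℂ) * Complex.exp (↑(2 * Real.pi * b * ((t : ℕ) + 1) / n) * Complex.I)
      = 0 := by
  have hn0 : n ≠ 0 := by rw [hn]; exact mul_ne_zero hl.ne' (by omega)
  set μ := Complex.exp (2 * Real.pi * Complex.I / n)
  have hμ : IsPrimitiveRoot μ n := Complex.isPrimitiveRoot_exp n hn0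
  have hexp : ∀ t : Fin n, Complex.exp (↑(2 * Real.pi * b * ((t : ℕ) + 1) / n) * Complex.I)
      = μ ^ b * (μ ^ b) ^ (t : ℕ) := fun t => by
    rw [← pow_succ', ← pow_mul, ← Complex.exp_nat_mul]
    congr 1
    push_cast
    ring
  simp only [hexp, mul_left_comm _ (μ ^ b), ← mul_sum]
  rw [sum_comp_replicate_mul_pow hl hn hσ (fun w => (g w : ℂ)), ← pow_mul, mul_comm b, pow_mul,
    (hμ.pow (Nat.pos_of_ne_zero hn0) hn).geom_sum_pow_eq_zero hb0 hbm, mul_zero, mul_zero]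

lemma balancedDesign_replicate {D : ℕ} (hl : 0 < l) (hDm : D < m) (hn : n = l * m)
    {h : Fin n → (Unit ⊕ Fin D × Bool) → ℝ}
    (hh : ∀ t : Fin n, h t = Sum.elim (fun _ => 1) (fun q =>
      if q.2 then Real.sin (2 * Real.pi * ((q.1 : ℕ) + 1) * ((t : ℕ) + 1) / n)
      else Real.cos (2 * Real.pi * ((q.1 : ℕ) + 1) * ((t : ℕ) + 1) / n)))
    {σp : Fin l → Fin v} {σ : Fin n → Fin v} (hσ : ∀ t : Fin n, σ t = σp ⟨t % l, Nat.mod_lt _ hl⟩)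
    {ξ : Fin v → Fin n → ℝ} (hξ : ∀ u t, ξ u t = if σ t = u then (n : ℝ)⁻¹ else 0)
    (hw : ∀ u, tpd ξ u ≠ 0) : BalancedDesign h ξ := by
  suffices hcol : ∀ u, (fun i => Hmat h ξ i u) = Sum.elim (fun _ => 1) (fun _ => 0) from
    fun u u' => (hcol u).trans (hcol u').symm
  intro u
  funext i
  rcases i with _ | ⟨a, β⟩
  · simpa [Hmat, hh, tpd] using inv_mul_cancel₀ (hw u)
  · have hS := sum_replicate_mul_exp_eq_zero hl hn hσ (fun w => if w = u then (n : ℝ)⁻¹ else 0)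
      (b := a + 1) (by omega) (by omega)
    simp only [← hξ] at hS
    suffices hsum : ∑ t, ξ u t * h t (Sum.inr (a, β)) = 0 by simp [Hmat, hsum]
    cases β
    · have hre := congrArg Complex.re hS
      simp only [Complex.re_sum, Complex.re_ofReal_mul, Complex.exp_ofReal_mul_I_re,
        Complex.zero_re] at hre
      simpa [hh] using hre
    · have him := congrArg Complex.im hS
      simp only [Complex.im_sum, Complex.im_ofReal_mul, Complex.exp_ofReal_mul_I_im,
        Complex.zero_im] at him
      simpa [hh] using him

end Replication

theorem stmt17_general {v s l m D : ℕ} (hl : 0 < l) (hDm : D < m)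
    (Q : Matrix (Fin v) (Fin s) ℝ)
    (hQc : ∀ j, ∑ i, Q i j = 0) (hQrow : ∀ i, ∃ j, Q i j ≠ 0)
    (hQrank : Q.rank = s)
    (Φ : Matrix (Fin s) (Fin s) ℝ → ℝ)
    (hiso : ∀ A B : Matrix (Fin s) (Fin s) ℝ,
      A.PosSemidef → B.PosSemidef → (B - A).PosSemidef → Φ A ≤ Φ B)
    (n : ℕ) (hn : n = l * m)
    (h : Fin n → (Unit ⊕ Fin D × Bool) → ℝ)
    (hh : ∀ t : Fin n, h t = Sum.elim (fun _ => 1) (fun q =>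
      if q.2 then Real.sin (2 * Real.pi * ((q.1 : ℕ) + 1) * ((t : ℕ) + 1) / n)
      else Real.cos (2 * Real.pi * ((q.1 : ℕ) + 1) * ((t : ℕ) + 1) / n)))
    (σp : Fin l → Fin v) (hσp : Function.Surjective σp)
    (wstar : Fin v → ℝ)
    (hwstar : ∀ u, wstar u
      = ((Finset.univ.filter fun k => σp k = u).card : ℝ) / l)
    (hopt : ∀ w : Fin v → ℝ, (∀ u, 0 < w u) → ∑ u, w u = 1 →
      Φ (NQ Q w) ≤ Φ (NQ Q wstar))
    (σ : Fin n → Fin v)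
    (hσ : ∀ t : Fin n, σ t = σp ⟨(t : ℕ) % l, Nat.mod_lt _ hl⟩)
    (ξσ : Fin v → Fin n → ℝ)
    (hξσ : ∀ u t, ξσ u t = if σ t = u then (n : ℝ)⁻¹ else 0) :
    Feasible h Q ξσ ∧
    (∀ G, IsGInv (momM h ξσ) G →
      ((Kmat (Unit ⊕ Fin D × Bool) Q)ᵀ * G * Kmat (Unit ⊕ Fin D × Bool) Q)⁻¹
        = NQ Q wstar) ∧
    (∀ ξ, IsDesign ξ → Feasible h Q ξ → ∀ G, IsGInv (momM h ξ) G →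
      Φ (((Kmat (Unit ⊕ Fin D × Bool) Q)ᵀ * G * Kmat (Unit ⊕ Fin D × Bool) Q)⁻¹)
        ≤ Φ (NQ Q wstar)) := by
  have htpd : tpd ξσ = wstar :=
    funext fun u => (tpd_replicate hl (by omega) hn hσ hξσ u).trans (hwstar u).symm
  have hw : ∀ u, tpd ξσ u ≠ 0 := fun u => by
    obtain ⟨k, rfl⟩ := hσp u
    have hk : 0 < #{k' | σp k' = σp k} := card_pos.2 ⟨k, by simp⟩
    rw [tpd_replicate hl (by omega) hn hσ hξσ]
    positivity
  have hR : NuisanceResistant h Q ξσ :=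
    (balancedDesign_replicate hl hDm hn hh hσ hξσ hw).nuisanceResistant hQc
  refine ⟨hR.feasible hw, fun G hG => htpd ▸ hR.inv_transpose_mul_mul_eq_NQ hw hG,
    fun ξ hξ hf G hG => ?_⟩
  have hwξ := tpd_pos_of_feasible hξ.1 hQrow hf
  have hB := posDef_transpose_mul_diagonal_inv_mul (mulVec_injective_of_rank_eq hQrank) hwξ
  have hAB := posSemidef_transpose_mul_mul_sub_of_feasible hξ.1 hQrow hf hG
  have hA : PosDef ((Kmat (Unit ⊕ Fin D × Bool) Q)ᵀ * G * Kmat (Unit ⊕ Fin D × Bool) Q) := by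
    simpa using hB.add_posSemidef hAB
  exact (hiso _ _ hA.inv.posSemidef hB.inv.posSemidef (posSemidef_inv_sub_inv hB hAB)).trans
    (hopt _ hwξ hξ.2)

/-- In the trigonometric time-trend model of degree D on
n = l·m times (D < m), the exact design ξ_σ obtained by m-fold replication of
a treatment sequence σ_p of length l whose treatment proportions w* are
Φ-optimal in the marginal model is feasible, has information matrix
(KᵀG*K)⁻¹ = N_Q(w*) for every generalized inverse G* of M(ξ_σ), and is
Φ-optimal among all designs. Here the nuisance coordinates are indexed by
Unit ⊕ (Fin D × Bool): the constant regressor 1 and, for each degree a+1 ≤ D,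
the regressors cos(2π(a+1)t/n) and sin(2π(a+1)t/n). -/
theorem stmt17 {v s l m D : ℕ} (hv : 2 ≤ v) (hl : 0 < l) (hm : 0 < m)
    (hD : 0 < D) (hDm : D < m)
    (Q : Matrix (Fin v) (Fin s) ℝ)
    (hQc : ∀ j, ∑ i, Q i j = 0) (hQrow : ∀ i, ∃ j, Q i j ≠ 0)
    (hQrank : Q.rank = s)
    (Φ : Matrix (Fin s) (Fin s) ℝ → ℝ)
    (hiso : ∀ A B : Matrix (Fin s) (Fin s) ℝ,
      A.PosSemidef → B.PosSemidef → (B - A).PosSemidef → Φ A ≤ Φ B)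
    (n : ℕ) (hn : n = l * m)
    (h : Fin n → (Unit ⊕ Fin D × Bool) → ℝ)
    (hh : ∀ t : Fin n, h t = Sum.elim (fun _ => 1) (fun q =>
      if q.2 then Real.sin (2 * Real.pi * ((q.1 : ℕ) + 1) * ((t : ℕ) + 1) / n)
      else Real.cos (2 * Real.pi * ((q.1 : ℕ) + 1) * ((t : ℕ) + 1) / n)))
    (σp : Fin l → Fin v) (hσp : Function.Surjective σp)
    (wstar : Fin v → ℝ)
    (hwstar : ∀ u, wstar u
      = ((Finset.univ.filter fun k => σp k = u).card : ℝ) / l)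
    (hopt : ∀ w : Fin v → ℝ, (∀ u, 0 < w u) → ∑ u, w u = 1 →
      Φ (NQ Q w) ≤ Φ (NQ Q wstar))
    (σ : Fin n → Fin v)
    (hσ : ∀ t : Fin n, σ t = σp ⟨(t : ℕ) % l, Nat.mod_lt _ hl⟩)
    (ξσ : Fin v → Fin n → ℝ)
    (hξσ : ∀ u t, ξσ u t = if σ t = u then (n : ℝ)⁻¹ else 0) :
    Feasible h Q ξσ ∧
    (∀ G, IsGInv (momM h ξσ) G →
      ((Kmat (Unit ⊕ Fin D × Bool) Q)ᵀ * G * Kmat (Unit ⊕ Fin D × Bool) Q)⁻¹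
        = NQ Q wstar) ∧
    (∀ ξ, IsDesign ξ → Feasible h Q ξ → ∀ G, IsGInv (momM h ξ) G →
      Φ (((Kmat (Unit ⊕ Fin D × Bool) Q)ᵀ * G * Kmat (Unit ⊕ Fin D × Bool) Q)⁻¹)
        ≤ Φ (NQ Q wstar)) :=
  stmt17_general hl hDm Q hQc hQrow hQrank Φ hiso n hn h hh σp hσp wstar hwstar hopt σ hσ ξσ hξσ

end
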